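/- arXiv:1510.05162 — 6 statements merged into one kernel-verified Lean document; each statement's English description precedes it below -/
import Mathlib

section
/- If x is a constant-free formula over 𝒜, then its short-circuit evaluation tree se(x) is open. -/
/-- Formulas over a set of atoms `A`: x ::= T | a | ¬x | x ∧ y. -/
inductive Fm (A : Type) : Type where
  | tru : Fm A
  | atom : A → Fm A
  | neg : Fm A → Fm A
  | con : Fm A → Fm A → Fm A

/-- Trees over `A`: X ::= T | F | X ⊴ a ⊵ X. -/
inductive Tr (A : Type) : Type where
  | tt : Tr A
  | ff : Tr A
  | node : Tr A → A → Tr A → Tr A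

namespace Tr

/-- The substitution X[T ↦ Y, F ↦ Z]. -/
def subst {A : Type} : Tr A → Tr A → Tr A → Tr A
  | tt, Y, _ => Y
  | ff, _, Z => Z
  | node l a r, Y, Z => node (subst l Y Z) a (subst r Y Z)

/-- All leaves of the tree are T. -/
def closedT {A : Type} : Tr A → Prop
  | tt => True
  | ff => False
  | node l _ r => closedT l ∧ closedT r

/-- All leaves of the tree are F. -/
def closedF {A : Type} : Tr A → Prop
  | tt => False
  | ff => True
  | node l _ r => closedF l ∧ closedF r

/-- A tree is open if it is neither closed by T nor closed by F. -/
def IsOpen {A : Type} (X : Tr A) : Prop := ¬ closedT X ∧ ¬ closedF X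

/-- The tree has at least one T leaf. -/
def hasT {A : Type} : Tr A → Prop
  | tt => True
  | ff => False
  | node l _ r => hasT l ∨ hasT r

/-- The tree has at least one F leaf. -/
def hasF {A : Type} : Tr A → Prop
  | tt => False
  | ff => True
  | node l _ r => hasF l ∨ hasF r

end Tr

/-- A formula is constant-free if it contains no occurrence of T. -/
def Fm.constFree {A : Type} : Fm A → Prop
  | .tru => False
  | .atom _ => True
  | .neg x => x.constFree
  | .con x y => x.constFree ∧ y.constFree

/-- The short-circuit evaluation tree of a formula. -/
def se {A : Type} : Fm A → Tr A
  | .tru => .tt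
  | .atom a => .node .tt a .ff
  | .neg x => (se x).subst .ff .tt
  | .con x y => (se x).subst (se y) .ff

/-- A valuation algebra: a nonempty set of valuations together with an
evaluation `/ : 𝒜 × V → Bool` and a derivative `• : 𝒜 × V → V`. -/
structure ValAlg (A : Type) : Type 1 where
  V : Type
  nonempty : Nonempty V
  eval : A → V → Bool
  deriv : A → V → V

namespace ValAlg

variable {A : Type}

/-- Simultaneous extension of evaluation and derivative to formulas:
`ev u x H = (x/H, x•H)`. -/
def ev (u : ValAlg A) : Fm A → u.V → Bool × u.V
  | .tru, H => (true, H)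
  | .atom a, H => (u.eval a H, u.deriv a H)
  | .neg x, H => ((u.ev x H).1.not, (u.ev x H).2)
  | .con x y, H => if (u.ev x H).1 then u.ev y (u.ev x H).2 else (false, (u.ev x H).2)

/-- The evaluation `x/H` of a formula. -/
def fEval (u : ValAlg A) (x : Fm A) (H : u.V) : Bool := (u.ev x H).1

/-- The derivative `x•H` of a formula. -/
def fDeriv (u : ValAlg A) (x : Fm A) (H : u.V) : u.V := (u.ev x H).2

/-- Repetition-proof valuation algebra: a/(a•H) = a/H. -/
def RepProof (u : ValAlg A) : Prop :=
  ∀ a H, u.eval a (u.deriv a H) = u.eval a H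

/-- Contractive: repetition-proof and a•a•H = a•H. -/
def Contractive (u : ValAlg A) : Prop :=
  u.RepProof ∧ ∀ a H, u.deriv a (u.deriv a H) = u.deriv a H

/-- Memorizing: contractive and a/(b•a•H) = a/H, a•b•a•H = b•a•H. -/
def Memorizing (u : ValAlg A) : Prop :=
  u.Contractive ∧
    (∀ a b H, u.eval a (u.deriv b (u.deriv a H)) = u.eval a H) ∧
    (∀ a b H, u.deriv a (u.deriv b (u.deriv a H)) = u.deriv b (u.deriv a H))

/-- Static: memorizing and a/(b•H) = a/H. -/
def Static (u : ValAlg A) : Prop :=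
  u.Memorizing ∧ ∀ a b H, u.eval a (u.deriv b H) = u.eval a H

end ValAlg

/-- Valuation congruence with respect to a valuation algebra. -/
def VCongr {A : Type} (u : ValAlg A) (x y : Fm A) : Prop :=
  ∀ H : u.V, u.fEval x H = u.fEval y H ∧ u.fDeriv x H = u.fDeriv y H

/-- Satisfiability w.r.t. all valuation algebras. -/
def SATfr {A : Type} (x : Fm A) : Prop :=
  ∃ u : ValAlg A, ∃ H : u.V, u.fEval x H = true

/-- Satisfiability w.r.t. repetition-proof valuation algebras. -/
def SATrp {A : Type} (x : Fm A) : Prop :=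
  ∃ u : ValAlg A, u.RepProof ∧ ∃ H : u.V, u.fEval x H = true

/-- Satisfiability w.r.t. contractive valuation algebras. -/
def SATcn {A : Type} (x : Fm A) : Prop :=
  ∃ u : ValAlg A, u.Contractive ∧ ∃ H : u.V, u.fEval x H = true

/-- Satisfiability w.r.t. memorizing valuation algebras. -/
def SATmem {A : Type} (x : Fm A) : Prop :=
  ∃ u : ValAlg A, u.Memorizing ∧ ∃ H : u.V, u.fEval x H = true

/-- Satisfiability w.r.t. static valuation algebras. -/
def SATst {A : Type} (x : Fm A) : Prop :=
  ∃ u : ValAlg A, u.Static ∧ ∃ H : u.V, u.fEval x H = true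

/-- A valuation path: a finite sequence of pairs in 𝒜 × {T, F}. -/
abbrev VPath (A : Type) := List (A × Bool)

/-- The (partial) result `P : X` of a valuation path on a tree. -/
def result {A : Type} [DecidableEq A] : VPath A → Tr A → Option Bool
  | [], .tt => some true
  | [], .ff => some false
  | (u, b) :: Q, .node X₁ a X₂ =>
      if u = a then (if b then result Q X₁ else result Q X₂) else none
  | _ :: _, .tt => none
  | _ :: _, .ff => none
  | [], .node _ _ _ => none

/-- A path is repetition-proof if equal adjacent atoms carry equal values. -/
def RepProofPath {A : Type} : VPath A → Prop
  | (u, b) :: (v, c) :: t => (u = v → b = c) ∧ RepProofPath ((v, c) :: t)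
  | _ => True

/-- A path is memorizing if equal atoms anywhere carry equal values. -/
def MemPath {A : Type} (P : VPath A) : Prop :=
  ∀ u b c, (u, b) ∈ P → (u, c) ∈ P → b = c

/-- Free path-satisfiability. -/
def PathSatFr {A : Type} [DecidableEq A] (x : Fm A) : Prop :=
  ∃ P : VPath A, result P (se x) = some true

/-- Rp-path-satisfiability. -/
def PathSatRp {A : Type} [DecidableEq A] (x : Fm A) : Prop :=
  ∃ P : VPath A, RepProofPath P ∧ result P (se x) = some true

/-- Mem-path-satisfiability. -/
def PathSatMem {A : Type} [DecidableEq A] (x : Fm A) : Prop :=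
  ∃ P : VPath A, MemPath P ∧ result P (se x) = some true

/-- Free path-falsifiability. -/
def PathFalFr {A : Type} [DecidableEq A] (x : Fm A) : Prop :=
  ∃ P : VPath A, result P (se x) = some false

/-- The evaluation path `x ⋄ H`. -/
def ValAlg.epath {A : Type} (u : ValAlg A) : Fm A → u.V → VPath A
  | .tru, _ => []
  | .atom a, H => [(a, u.eval a H)]
  | .neg x, H => u.epath x H
  | .con x y, H =>
      if u.fEval x H then u.epath x H ++ u.epath y (u.fDeriv x H) else u.epath x H

/-- `lastIdx a P k` is the largest 1-based index `i ≤ min k |P|` with `uᵢ = a`,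
or 0 if no such index exists. -/
def lastIdx {A : Type} [DecidableEq A] (a : A) (P : VPath A) : ℕ → ℕ
  | 0 => 0
  | k + 1 => if (P[k]?).map Prod.fst = some a then k + 1 else lastIdx a P k

/-- The norm-based constructor `va`; the valuation `i : Fin (|P| + 1)`
represents the 1-based valuation `i + 1` of the paper. -/
def va {A : Type} [DecidableEq A] (P : VPath A) : ValAlg A where
  V := Fin (P.length + 1)
  nonempty := ⟨0⟩
  eval a i :=
    match lastIdx a P (i.1 + 1) with
    | 0 => false
    | j + 1 => ((P[j]?).map Prod.snd).getD false
  deriv a i :=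
    if h : i.1 < P.length ∧ (P[i.1]?).map Prod.fst = some a
    then ⟨i.1 + 1, by omega⟩ else i

/-- Helper for contraction: `cnAux a Q` drops leading repetitions of `a`. -/
def cnAux {A : Type} [DecidableEq A] : A → VPath A → VPath A
  | _, [] => []
  | a, (u, b) :: Q => if u = a then cnAux a Q else (u, b) :: cnAux u Q

/-- The contraction of a valuation path. -/
def cn {A : Type} [DecidableEq A] : VPath A → VPath A
  | [] => []
  | (u, b) :: Q => (u, b) :: cnAux u Q

/-- The norm-based constructor `sva`, a trivial valuation algebra. -/
def sva {A : Type} [DecidableEq A] (P : VPath A) : ValAlg A where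
  V := PUnit
  nonempty := ⟨PUnit.unit⟩
  eval a _ := decide ((a, true) ∈ P)
  deriv _ H := H

/-!
By induction on `x`, `se x` has both a T-leaf and an F-leaf: negation swaps the two kinds of
leaves, and in `se (x ∧ y)` every T-leaf of `se x` is replaced by a copy of `se y` (which has
both), while the F-leaves of `se x` stay F.
-/

namespace Tr

variable {A : Type}

theorem hasT_subst (X Y Z : Tr A) :
    (X.subst Y Z).hasT ↔ X.hasT ∧ Y.hasT ∨ X.hasF ∧ Z.hasT := by
  induction X with
  | tt => simp [subst, hasT, hasF]
  | ff => simp [subst, hasT, hasF]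
  | node l a r ihl ihr => simp only [subst, hasT, hasF, ihl, ihr]; tauto

theorem hasF_subst (X Y Z : Tr A) :
    (X.subst Y Z).hasF ↔ X.hasT ∧ Y.hasF ∨ X.hasF ∧ Z.hasF := by
  induction X with
  | tt => simp [subst, hasT, hasF]
  | ff => simp [subst, hasT, hasF]
  | node l a r ihl ihr => simp only [subst, hasT, hasF, ihl, ihr]; tauto

theorem closedT_iff_not_hasF (X : Tr A) : X.closedT ↔ ¬ X.hasF := by
  induction X with
  | tt => simp [closedT, hasF]
  | ff => simp [closedT, hasF]
  | node l a r ihl ihr => simp only [closedT, hasF, ihl, ihr]; tauto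

theorem closedF_iff_not_hasT (X : Tr A) : X.closedF ↔ ¬ X.hasT := by
  induction X with
  | tt => simp [closedF, hasT]
  | ff => simp [closedF, hasT]
  | node l a r ihl ihr => simp only [closedF, hasT, ihl, ihr]; tauto

theorem isOpen_iff_hasT_and_hasF (X : Tr A) : X.IsOpen ↔ X.hasT ∧ X.hasF := by
  rw [IsOpen, closedT_iff_not_hasF, closedF_iff_not_hasT, not_not, not_not, and_comm]

end Tr

theorem Fm.constFree.hasT_se_and_hasF_se {A : Type} {x : Fm A} (hx : x.constFree) :
    (se x).hasT ∧ (se x).hasF := by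
  induction x with
  | tru => exact hx.elim
  | atom a => exact ⟨Or.inl trivial, Or.inr trivial⟩
  | neg x ih =>
    obtain ⟨hT, hF⟩ := ih hx
    simp only [se, Tr.hasT_subst, Tr.hasF_subst, Tr.hasT, Tr.hasF]
    tauto
  | con x y ihx ihy =>
    obtain ⟨hxT, hxF⟩ := ihx hx.1
    obtain ⟨hyT, hyF⟩ := ihy hx.2
    simp only [se, Tr.hasT_subst, Tr.hasF_subst, Tr.hasF]
    tauto

/-- If `x` is a constant-free formula, then `se x` is open. -/
theorem stmt_1 {A : Type} (x : Fm A) (hx : x.constFree) : (se x).IsOpen :=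
  (Tr.isOpen_iff_hasT_and_hasF _).2 hx.hasT_se_and_hasF_se
end

section
/- Let V be a static valuation algebra. Then for all formulas x, y and all H ∈ V: x/(y • H) = x/H. -/
/-! In a static algebra no derivative `y • H` changes the value of an atom. Hence, by induction on
`x`, the value `x/H` depends only on the values of the atoms at `H`, and these agree at `y • H`. -/

namespace ValAlg

variable {A : Type} (u : ValAlg A)

lemma fDeriv_con (x y : Fm A) (H : u.V) :
    u.fDeriv (.con x y) H = if u.fEval x H then u.fDeriv y (u.fDeriv x H) else u.fDeriv x H := by
  simp only [fDeriv, fEval, ev]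
  split <;> simp_all

lemma fEval_con (x y : Fm A) (H : u.V) :
    u.fEval (.con x y) H = (u.fEval x H && u.fEval y (u.fDeriv x H)) := by
  simp only [fDeriv, fEval, ev]
  split <;> simp_all

variable {u}

lemma eval_fDeriv (hst : ∀ a b H, u.eval a (u.deriv b H) = u.eval a H)
    (a : A) (y : Fm A) (H : u.V) : u.eval a (u.fDeriv y H) = u.eval a H := by
  induction y generalizing H with
  | tru => rfl
  | atom b => exact hst a b H
  | neg y ih => exact ih H
  | con y z ihy ihz =>
    rw [fDeriv_con]
    split
    · rw [ihz, ihy]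
    · exact ihy H

lemma fEval_congr (hst : ∀ a b H, u.eval a (u.deriv b H) = u.eval a H)
    (x : Fm A) {H H' : u.V} (h : ∀ a, u.eval a H = u.eval a H') :
    u.fEval x H = u.fEval x H' := by
  induction x generalizing H H' with
  | tru => rfl
  | atom a => exact h a
  | neg x ih => exact congrArg Bool.not (ih h)
  | con x y ihx ihy =>
    simp only [fEval_con, ihx h]
    congr 1
    exact ihy fun a => by rw [eval_fDeriv hst, eval_fDeriv hst, h]

end ValAlg

/-- In a static valuation algebra, `x/(y•H) = x/H` for all
formulas `x`, `y` and all valuations `H`. -/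
theorem stmt_4 {A : Type} (u : ValAlg A) (hu : u.Static) (x y : Fm A) (H : u.V) :
    u.fEval x (u.fDeriv y H) = u.fEval x H :=
  ValAlg.fEval_congr hu.2 x (ValAlg.eval_fDeriv hu.2 · y H)
end

section
/- Let X, Y, Y' be trees and let P, Q be valuation paths. If the result P : X is defined, say P : X = β ∈ {T, F}, then the result of P·Q on the substitution of X that replaces β-leaves by Y and (¬β)-leaves by Y' equals Q : Y; that is, (P·Q) : X[β↦Y, ¬β↦Y'] = Q : Y. -/
theorem result_append_subst {A : Type} [DecidableEq A] {P : VPath A} {X : Tr A} {b : Bool}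
    (h : result P X = some b) (Q : VPath A) (Y Z : Tr A) :
    result (P ++ Q) (X.subst Y Z) = result Q (if b then Y else Z) := by
  induction P generalizing X with
  | nil =>
    cases X with
    | tt | ff => cases h; rfl
    | node => simp [result] at h
  | cons p P ih =>
    obtain ⟨u, c⟩ := p
    cases X with
    | tt | ff => simp [result] at h
    | node l a r =>
      by_cases hu : u = a
      · subst hu
        cases c <;> simp_all [result, Tr.subst]
      · simp [result, hu] at h

/-- If `P : X = β`, then
`(P·Q) : X[β↦Y, ¬β↦Y'] = Q : Y`. -/
theorem stmt_9 {A : Type} [DecidableEq A] (X Y Y' : Tr A) (P Q : VPath A) (b : Bool)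
    (h : result P X = some b) :
    result (P ++ Q) (if b then X.subst Y Y' else X.subst Y' Y) = result Q Y := by
  cases b <;> simp [result_append_subst h]
end

section
/- Let X, Y, Y' be trees and P a valuation path. If P : X[T↦Y, F↦Y'] is defined, then there exist valuation paths R and Q with P = R·Q such that R : X is defined, and P : X[T↦Y, F↦Y'] = Q : Y if R : X = T and P : X[T↦Y, F↦Y'] = Q : Y' otherwise. -/
/-! Induction on `X`: inside `X[T↦Y, F↦Y']` the path follows the copy of `X` step by step, so the
prefix `R` that reaches a leaf of `X` is also defined on `X`, and the remainder `Q` then runs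
in the tree `Y` or `Y'` substituted for that leaf. -/

namespace Tr

variable {A : Type}

theorem subst_cond (b : Bool) (l r Y Y' : Tr A) :
    (bif b then l else r).subst Y Y' = bif b then l.subst Y Y' else r.subst Y Y' := by
  cases b <;> rfl

end Tr

section Result

variable {A : Type} [DecidableEq A]

theorem result_nil_node (l r : Tr A) (a : A) : result [] (.node l a r) = none := rfl

theorem result_cons_node_self (a : A) (c : Bool) (Q : VPath A) (l r : Tr A) :
    result ((a, c) :: Q) (.node l a r) = result Q (bif c then l else r) := by
  cases c <;> simp [result]

theorem eq_of_isSome_result_cons_node {u a : A} {c : Bool} {Q : VPath A} {l r : Tr A}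
    (h : (result ((u, c) :: Q) (.node l a r)).isSome) : u = a := by
  by_contra hu
  simp [result, hu] at h

end Result

/-- If `P : X[T↦Y, F↦Y']` is defined, then `P` splits as `R·Q`
with `R : X` defined, and `P : X[T↦Y, F↦Y']` equals `Q : Y` if `R : X = T`
and `Q : Y'` otherwise. -/
theorem stmt_11 {A : Type} [DecidableEq A] (X Y Y' : Tr A) (P : VPath A)
    (h : (result P (X.subst Y Y')).isSome) :
    ∃ (R Q : VPath A) (b : Bool), P = R ++ Q ∧ result R X = some b ∧
      result P (X.subst Y Y') = (if b then result Q Y else result Q Y') := by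
  induction X generalizing P with
  | tt => exact ⟨[], P, true, rfl, rfl, rfl⟩
  | ff => exact ⟨[], P, false, rfl, rfl, rfl⟩
  | node l a r ihl ihr =>
    match P, h with
    | [], h => simp [Tr.subst, result_nil_node] at h
    | (u, c) :: Q, h =>
      obtain rfl := eq_of_isSome_result_cons_node h
      rw [Tr.subst, result_cons_node_self, ← Tr.subst_cond] at h ⊢
      obtain ⟨R, Q', b, rfl, hR, hres⟩ : ∃ (R Q' : VPath A) (b : Bool), Q = R ++ Q' ∧
          result R (bif c then l else r) = some b ∧
          result Q ((bif c then l else r).subst Y Y') =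
            (if b then result Q' Y else result Q' Y') := by
        cases c
        exacts [ihr Q h, ihl Q h]
      exact ⟨(u, c) :: R, Q', b, rfl, by rwa [result_cons_node_self], hres⟩
end

section
/- Let x be a formula. (a) If SAT_fr(x), then PathSat_fr(x). (b) If SAT_rp(x), then PathSat_rp(x). (c) If SAT_mem(x), then PathSat_mem(x). -/
/-!
Given a valuation `H` with `x/H = T`, the evaluation path `x ⋄ H` (the atoms evaluated
in order, each with the value it received) leads `se x` to a `T` leaf: evaluating `x` and
then walking down `se x` make the same choices. This path is a run of the algebra from `H`,
so the repetition-proof law makes it a repetition-proof path, and the memorizing laws make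
every later value of an atom agree with its first one.
-/

namespace Tr

variable {A : Type}

theorem subst_subst (X Y Z Y' Z' : Tr A) :
    (X.subst Y' Z').subst Y Z = X.subst (Y'.subst Y Z) (Z'.subst Y Z) := by
  induction X with
  | tt | ff => rfl
  | node l a r ihl ihr => simp only [subst, ihl, ihr]

theorem subst_tt_ff (X : Tr A) : X.subst .tt .ff = X := by
  induction X with
  | tt | ff => rfl
  | node l a r ihl ihr => simp only [subst, ihl, ihr]

end Tr

section ShortCircuit

variable {A : Type}

theorem se_neg_subst (x : Fm A) (Y Z : Tr A) :
    (se (.neg x)).subst Y Z = (se x).subst Z Y := by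
  simp only [se, Tr.subst_subst, Tr.subst]

theorem se_con_subst (x y : Fm A) (Y Z : Tr A) :
    (se (.con x y)).subst Y Z = (se x).subst ((se y).subst Y Z) Z := by
  simp only [se, Tr.subst_subst, Tr.subst]

end ShortCircuit

namespace ValAlg

variable {A : Type} (u : ValAlg A)

theorem fEval_neg (x : Fm A) (H : u.V) : u.fEval (.neg x) H = !u.fEval x H := rfl

variable {u}

theorem fEval_con_of_true {x : Fm A} (y : Fm A) {H : u.V} (h : u.fEval x H = true) :
    u.fEval (.con x y) H = u.fEval y (u.fDeriv x H) := by
  simp only [fEval, fDeriv, ev] at h ⊢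
  simp only [h, if_true]

theorem fDeriv_con_of_true {x : Fm A} (y : Fm A) {H : u.V} (h : u.fEval x H = true) :
    u.fDeriv (.con x y) H = u.fDeriv y (u.fDeriv x H) := by
  simp only [fEval, fDeriv, ev] at h ⊢
  simp only [h, if_true]

theorem fEval_con_of_false {x : Fm A} (y : Fm A) {H : u.V} (h : u.fEval x H = false) :
    u.fEval (.con x y) H = false := by
  simp only [fEval, ev] at h ⊢
  simp only [h, Bool.false_eq_true, if_false]

theorem fDeriv_con_of_false {x : Fm A} (y : Fm A) {H : u.V} (h : u.fEval x H = false) :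
    u.fDeriv (.con x y) H = u.fDeriv x H := by
  simp only [fEval, fDeriv, ev] at h ⊢
  simp only [h, Bool.false_eq_true, if_false]

theorem epath_con_of_true {x : Fm A} (y : Fm A) {H : u.V} (h : u.fEval x H = true) :
    u.epath (.con x y) H = u.epath x H ++ u.epath y (u.fDeriv x H) := by
  simp only [epath, h, if_true]

theorem epath_con_of_false {x : Fm A} (y : Fm A) {H : u.V} (h : u.fEval x H = false) :
    u.epath (.con x y) H = u.epath x H := by
  simp only [epath, h, Bool.false_eq_true, if_false]

variable (u)

theorem result_epath_append_se_subst [DecidableEq A] (x : Fm A) (H : u.V) (Q : VPath A)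
    (Y Z : Tr A) :
    result (u.epath x H ++ Q) ((se x).subst Y Z) =
      result Q (if u.fEval x H then Y else Z) := by
  induction x generalizing H Q Y Z with
  | tru => rfl
  | atom a =>
    simp only [epath, se, Tr.subst, List.cons_append, List.nil_append, result, if_true]
    cases h : u.eval a H <;> simp only [fEval, ev, h] <;> rfl
  | neg x ih =>
    rw [se_neg_subst, fEval_neg]
    cases hx : u.fEval x H <;> simp only [epath, ih, hx] <;> rfl
  | con x y ihx ihy =>
    rw [se_con_subst]
    cases hx : u.fEval x H
    · rw [epath_con_of_false y hx, ihx, fEval_con_of_false y hx, hx]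
      rfl
    · rw [epath_con_of_true y hx, List.append_assoc, ihx, hx, if_pos rfl, ihy,
        fEval_con_of_true y hx]

theorem result_epath_se [DecidableEq A] {x : Fm A} {H : u.V} (h : u.fEval x H = true) :
    result (u.epath x H) (se x) = some true := by
  simpa [Tr.subst_tt_ff, h, result] using u.result_epath_append_se_subst x H [] .tt .ff

def IsRun : u.V → VPath A → Prop
  | _, [] => True
  | H, (a, b) :: Q => b = u.eval a H ∧ IsRun (u.deriv a H) Q

theorem isRun_epath_append (x : Fm A) (H : u.V) (Q : VPath A)
    (hQ : u.IsRun (u.fDeriv x H) Q) : u.IsRun H (u.epath x H ++ Q) := by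
  induction x generalizing H Q with
  | tru => exact hQ
  | atom a => exact ⟨rfl, hQ⟩
  | neg x ih => exact ih H Q hQ
  | con x y ihx ihy =>
    cases hx : u.fEval x H
    · rw [epath_con_of_false y hx]
      exact ihx H Q (by rwa [← fDeriv_con_of_false y hx])
    · rw [epath_con_of_true y hx, List.append_assoc]
      exact ihx H _ (ihy _ Q (by rwa [← fDeriv_con_of_true y hx]))

theorem isRun_epath (x : Fm A) (H : u.V) : u.IsRun H (u.epath x H) := by
  simpa using u.isRun_epath_append x H [] trivial

variable {u}

theorem RepProof.repProofPath_of_isRun (hrp : u.RepProof) :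
    ∀ {H : u.V} {P : VPath A}, u.IsRun H P → RepProofPath P
  | _, [], _ => trivial
  | _, [_], _ => trivial
  | H, (a, _) :: (_, _) :: _, ⟨hb, hd, ht⟩ =>
    ⟨by rintro rfl; rw [hb, hd, hrp a H], hrp.repProofPath_of_isRun ⟨hd, ht⟩⟩

theorem Memorizing.eval_eq_of_isRun_deriv (hm : u.Memorizing) :
    ∀ {H : u.V} {a : A} {b : Bool} {P : VPath A},
      u.IsRun (u.deriv a H) P → (a, b) ∈ P → b = u.eval a H
  | _, _, _, [], _, hmem => absurd hmem List.not_mem_nil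
  | H, a, b, (c, _) :: Q, ⟨hd, hQ⟩, hmem => by
    rcases List.mem_cons.mp hmem with h | h
    · cases h
      rw [hd, hm.1.1]
    · -- `c • a • H` is fixed by `a •` and gives `a` its value at `H`, so induction applies
      have hK := hm.eval_eq_of_isRun_deriv (H := u.deriv c (u.deriv a H))
        (by rwa [hm.2.2 a c H]) h
      rwa [hm.2.1 a c H] at hK

theorem Memorizing.memPath_of_isRun (hm : u.Memorizing) :
    ∀ {H : u.V} {P : VPath A}, u.IsRun H P → MemPath P
  | _, [], _ => fun _ _ _ h => absurd h List.not_mem_nil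
  | H, (a, b) :: Q, ⟨hb, hQ⟩ => by
    have hhead : ∀ c, (a, c) ∈ (a, b) :: Q → c = u.eval a H := by
      intro c hc
      rcases List.mem_cons.mp hc with h | h
      · cases h
        exact hb
      · exact hm.eval_eq_of_isRun_deriv hQ h
    intro v c d hc hd
    by_cases hva : v = a
    · subst hva
      rw [hhead c hc, hhead d hd]
    · have hne : ∀ e, (v, e) ≠ (a, b) := fun e h => hva (Prod.ext_iff.mp h).1
      exact hm.memPath_of_isRun hQ v c d ((List.mem_cons.mp hc).resolve_left (hne c))
        ((List.mem_cons.mp hd).resolve_left (hne d))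

end ValAlg

/-- SAT implies PathSat, for fr, rp and mem. -/
theorem stmt_17 {A : Type} [DecidableEq A] (x : Fm A) :
    (SATfr x → PathSatFr x) ∧ (SATrp x → PathSatRp x) ∧
    (SATmem x → PathSatMem x) := by
  refine ⟨?_, ?_, ?_⟩
  · rintro ⟨u, H, h⟩
    exact ⟨u.epath x H, u.result_epath_se h⟩
  · rintro ⟨u, hrp, H, h⟩
    exact ⟨u.epath x H, hrp.repProofPath_of_isRun (u.isRun_epath x H), u.result_epath_se h⟩
  · rintro ⟨u, hm, H, h⟩
    exact ⟨u.epath x H, hm.memPath_of_isRun (u.isRun_epath x H), u.result_epath_se h⟩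
end

section
/- Let x be a formula and P a valuation path such that P : se(x) is defined. (a) In the valuation algebra va(P), x/1 = P : se(x). (b) If P is repetition-proof, then in cva(P) := va(cn(P)), x/1 = P : se(x). (c) If P is memorizing, then in sva(P), x/1 = P : se(x). -/
section Paths

variable {A : Type} [DecidableEq A]

theorem result_tt_eq_some {Q : VPath A} {b : Bool} (h : result Q .tt = some b) :
    Q = [] ∧ b = true := by
  rcases Q with _ | ⟨⟨u, c⟩, Q⟩ <;> simp_all [result]

theorem result_ff_eq_some {Q : VPath A} {b : Bool} (h : result Q .ff = some b) :
    Q = [] ∧ b = false := by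
  rcases Q with _ | ⟨⟨u, c⟩, Q⟩ <;> simp_all [result]

theorem result_node_eq_some {Q : VPath A} {l r : Tr A} {a : A} {b : Bool}
    (h : result Q (.node l a r) = some b) :
    ∃ c Q', Q = (a, c) :: Q' ∧ result Q' (if c then l else r) = some b := by
  rcases Q with _ | ⟨⟨u, c⟩, Q'⟩
  · simp [result] at h
  · by_cases hu : u = a
    · subst hu
      cases c <;> simpa [result] using h
    · simp [result, hu] at h

theorem result_subst_eq_some {Q : VPath A} {X Y Z : Tr A} {b : Bool}
    (h : result Q (X.subst Y Z) = some b) :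
    ∃ Q₁ Q₂ c, Q = Q₁ ++ Q₂ ∧ result Q₁ X = some c ∧
      result Q₂ (if c then Y else Z) = some b := by
  induction X generalizing Q with
  | tt => exact ⟨[], Q, true, rfl, rfl, h⟩
  | ff => exact ⟨[], Q, false, rfl, rfl, h⟩
  | node l a r ihl ihr =>
    obtain ⟨c, Q', rfl, h'⟩ := result_node_eq_some h
    cases c
    · obtain ⟨Q₁, Q₂, d, rfl, h₁, h₂⟩ := ihr h'
      exact ⟨(a, false) :: Q₁, Q₂, d, rfl, by simpa [result] using h₁, h₂⟩
    · obtain ⟨Q₁, Q₂, d, rfl, h₁, h₂⟩ := ihl h'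
      exact ⟨(a, true) :: Q₁, Q₂, d, rfl, by simpa [result] using h₁, h₂⟩

end Paths

namespace ValAlg

variable {A : Type}

def IsPathSimulation (u : ValAlg A) (S : u.V → VPath A → Prop) : Prop :=
  ∀ H a c Q, S H ((a, c) :: Q) → u.eval a H = c ∧ S (u.deriv a H) Q

theorem IsPathSimulation.ev_se [DecidableEq A] {u : ValAlg A} {S : u.V → VPath A → Prop}
    (hS : u.IsPathSimulation S) (x : Fm A) {Q R : VPath A} {H : u.V} {b : Bool}
    (hx : result Q (se x) = some b) (hH : S H (Q ++ R)) :
    (u.ev x H).1 = b ∧ S (u.ev x H).2 R := by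
  induction x generalizing Q R H b with
  | tru =>
    obtain ⟨rfl, rfl⟩ := result_tt_eq_some hx
    exact ⟨rfl, hH⟩
  | atom a =>
    obtain ⟨c, Q', rfl, hQ'⟩ := result_node_eq_some hx
    have hc : Q' = [] ∧ c = b := by
      cases c
      · exact (result_ff_eq_some hQ').imp id Eq.symm
      · exact (result_tt_eq_some hQ').imp id Eq.symm
    obtain ⟨rfl, rfl⟩ := hc
    exact hS H a c R hH
  | neg x ih =>
    obtain ⟨Q₁, Q₂, c, rfl, h₁, h₂⟩ := result_subst_eq_some hx
    obtain ⟨hc, hR⟩ := ih h₁ (by rwa [List.append_assoc] at hH)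
    have hQ₂ : Q₂ = [] ∧ b = !c := by
      cases c
      · exact result_tt_eq_some h₂
      · exact result_ff_eq_some h₂
    obtain ⟨rfl, rfl⟩ := hQ₂
    exact ⟨by simp [ev, hc], hR⟩
  | con x y ihx ihy =>
    obtain ⟨Q₁, Q₂, c, rfl, h₁, h₂⟩ := result_subst_eq_some hx
    obtain ⟨hc, hR⟩ := ihx h₁ (by rwa [List.append_assoc] at hH)
    cases c with
    | true => simpa [ev, hc] using ihy h₂ hR
    | false =>
      obtain ⟨rfl, rfl⟩ := result_ff_eq_some h₂
      exact ⟨by simp [ev, hc], by simpa [ev, hc] using hR⟩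

theorem IsPathSimulation.fEval_se [DecidableEq A] {u : ValAlg A} {S : u.V → VPath A → Prop}
    (hS : u.IsPathSimulation S) (x : Fm A) {Q : VPath A} {H : u.V} {b : Bool}
    (hx : result Q (se x) = some b) (hH : S H Q) : u.fEval x H = b :=
  (hS.ev_se x (R := []) hx (by rwa [List.append_nil])).1

end ValAlg

section PathAlgebras

variable {A : Type} [DecidableEq A]

theorem va_eval_of_drop_eq_cons {P Q : VPath A} {i : Fin (P.length + 1)} {a : A} {c : Bool}
    (h : P.drop i = (a, c) :: Q) : (va P).eval a i = c := by
  have hget : P[i.1]? = some (a, c) := by rw [← List.head?_drop, h]; rfl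
  simp [va, lastIdx, hget]

theorem va_deriv_val_of_drop_eq_cons {P Q : VPath A} {i : Fin (P.length + 1)} {a : A}
    {c : Bool} (h : P.drop i = (a, c) :: Q) : ((va P).deriv a i).1 = i + 1 := by
  have hi : i.1 < P.length := by
    by_contra hge
    simp [List.drop_eq_nil_of_le (by omega : P.length ≤ i.1)] at h
  rw [List.drop_eq_getElem_cons hi, List.cons.injEq] at h
  simp [va, hi, h.1]

theorem va_deriv_of_head_ne {P : VPath A} {i : Fin (P.length + 1)} {a : A}
    (h : ∀ p ∈ (P.drop i).head?, p.1 ≠ a) : (va P).deriv a i = i := by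
  rw [List.head?_drop] at h
  simp only [va, dite_eq_right_iff]
  intro ⟨_, ha⟩
  obtain ⟨p, hp, rfl⟩ := Option.map_eq_some_iff.mp ha
  exact absurd rfl (h p hp)

theorem va_eval_of_drop_pred_eq_cons {P Q : VPath A} {i : Fin (P.length + 1)} {a : A}
    {c : Bool} (hi : 0 < i.1) (h : P.drop (i - 1) = (a, c) :: Q)
    (hQ : ∀ p ∈ Q.head?, p.1 ≠ a) : (va P).eval a i = c := by
  obtain ⟨j, hj⟩ : ∃ j, i.1 = j + 1 := ⟨i.1 - 1, by omega⟩
  rw [hj, Nat.add_sub_cancel] at h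
  have hget : P[j]? = some (a, c) := by rw [← List.head?_drop, h]; rfl
  have hnext : (P[j + 1]?).map Prod.fst ≠ some a := by
    rw [← List.head?_drop, List.drop_add_one_eq_tail_drop, h, List.tail_cons]
    intro hne
    obtain ⟨p, hp, rfl⟩ := Option.map_eq_some_iff.mp hne
    exact hQ p hp rfl
  simp [va, hj, lastIdx, hnext, hget]

theorem va_isPathSimulation (P : VPath A) :
    (va P).IsPathSimulation (fun i Q => P.drop i.1 = Q) := by
  intro (i : Fin (P.length + 1)) a c Q (h : P.drop i = (a, c) :: Q)
  refine ⟨va_eval_of_drop_eq_cons h, ?_⟩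
  show P.drop ((va P).deriv a i).1 = Q
  rw [va_deriv_val_of_drop_eq_cons h, List.drop_add_one_eq_tail_drop, h, List.tail_cons]

theorem cnAux_head?_ne (a : A) (Q : VPath A) : ∀ p ∈ (cnAux a Q).head?, p.1 ≠ a := by
  induction Q with
  | nil => simp [cnAux]
  | cons q Q ih =>
    by_cases hq : q.1 = a
    · simpa [cnAux, hq] using ih
    · simp [cnAux, hq]

omit [DecidableEq A] in
theorem RepProofPath.of_cons {p : A × Bool} {Q : VPath A} (h : RepProofPath (p :: Q)) :
    RepProofPath Q := by
  rcases Q with _ | ⟨q, Q⟩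
  · trivial
  · exact h.2

omit [DecidableEq A] in
theorem RepProofPath.eq_of_cons_cons {a : A} {c d : Bool} {Q : VPath A}
    (h : RepProofPath ((a, c) :: (a, d) :: Q)) : c = d :=
  h.1 rfl

/-- Position `i` of `C = cn P` faces the remaining path `Q` of `P`, or has just read a segment
`p` whose repetitions at the head of `Q` were contracted away. -/
def TracksContraction (C : VPath A) (i : ℕ) (Q : VPath A) : Prop :=
  (C.drop i = cn Q ∧ RepProofPath Q) ∨
    ∃ p, 0 < i ∧ C.drop (i - 1) = cn (p :: Q) ∧ RepProofPath (p :: Q)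

theorem TracksContraction.step_of_drop_eq_cn {C Q : VPath A} {i : Fin (C.length + 1)}
    {a : A} {c : Bool} (hC : C.drop i = cn ((a, c) :: Q)) (hQ : RepProofPath ((a, c) :: Q)) :
    (va C).eval a i = c ∧ TracksContraction C ((va C).deriv a i).1 Q := by
  refine ⟨va_eval_of_drop_eq_cons hC, Or.inr ⟨(a, c), ?_⟩⟩
  rw [va_deriv_val_of_drop_eq_cons hC, Nat.add_sub_cancel]
  exact ⟨Nat.succ_pos _, hC, hQ⟩

theorem va_isPathSimulation_tracksContraction (C : VPath A) :
    (va C).IsPathSimulation (fun i Q => TracksContraction C i.1 Q) := by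
  rintro (i : Fin (C.length + 1)) v c Q (⟨hC, hQ⟩ | ⟨⟨a, d⟩, hi, hC, hQ⟩)
  · exact TracksContraction.step_of_drop_eq_cn hC hQ
  by_cases hva : v = a
  · subst hva
    obtain rfl : c = d := hQ.eq_of_cons_cons.symm
    have hC' : C.drop (i - 1) = cn ((v, c) :: Q) := by simpa [cn, cnAux] using hC
    have hCi : C.drop i = cnAux v Q := by
      rw [show i.1 = i.1 - 1 + 1 by omega, List.drop_add_one_eq_tail_drop, hC']
      rfl
    refine ⟨va_eval_of_drop_pred_eq_cons hi hC' (cnAux_head?_ne v Q), ?_⟩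
    show TracksContraction C ((va C).deriv v i).1 Q
    rw [va_deriv_of_head_ne (by rw [hCi]; exact cnAux_head?_ne v Q)]
    exact Or.inr ⟨(v, c), hi, hC', hQ.of_cons⟩
  · have hC' : C.drop i = cn ((v, c) :: Q) := by
      rw [show i.1 = i.1 - 1 + 1 by omega, List.drop_add_one_eq_tail_drop, hC]
      simp [cn, cnAux, hva]
    exact TracksContraction.step_of_drop_eq_cn hC' hQ.of_cons

theorem sva_isPathSimulation {P : VPath A} (hP : MemPath P) :
    (sva P).IsPathSimulation (fun _ Q => Q ⊆ P) := by
  intro _ a c Q h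
  have ha : (a, c) ∈ P := h List.mem_cons_self
  refine ⟨?_, fun e he => h (List.mem_cons_of_mem _ he)⟩
  cases c
  · simpa [sva] using fun ht => Bool.noConfusion (hP a true false ht ha)
  · simpa [sva] using ha

end PathAlgebras

/-- If `P : se x` is defined then `x/1 = P : se x` in `va P`;
moreover in `cva P = va (cn P)` if `P` is repetition-proof, and in `sva P`
if `P` is memorizing. (Valuation `1` of the paper is index `0` here.) -/
theorem stmt_18 {A : Type} [DecidableEq A] (x : Fm A) (P : VPath A) (b : Bool)
    (h : result P (se x) = some b) :
    (va P).fEval x (0 : Fin (P.length + 1)) = b ∧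
    (RepProofPath P → (va (cn P)).fEval x (0 : Fin ((cn P).length + 1)) = b) ∧
    (MemPath P → (sva P).fEval x PUnit.unit = b) :=
  ⟨(va_isPathSimulation P).fEval_se x h rfl,
    fun hP => (va_isPathSimulation_tracksContraction (cn P)).fEval_se x h (Or.inl ⟨rfl, hP⟩),
    fun hP => (sva_isPathSimulation hP).fEval_se x h (List.Subset.refl P)⟩
end
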